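/- Let m be a positive integer and γ > 0. Let s : ℝ → ℝᵐ be differentiable on [0,∞), and suppose there exist functions w : ℝ → ℝᵐ and c : ℝ → ℝ such that for every t ≥ 0 one has ‖w(t)‖ ≤ c(t) and s′(t) = w(t) − (γ + c(t))·sgn(s(t)). Then s(t) = 0 for every t ≥ ‖s(0)‖/γ; in particular, s reaches zero in finite time and remains zero afterwards. -/

import Mathlib

open scoped RealInnerProductSpace

/-- The componentwise sign vector: `(signVec s) i = 1` if `s i > 0`, `-1` if `s i < 0`,
and `0` if `s i = 0` (this is exactly `Real.sign`). -/
noncomputable def signVec {m : ℕ} (s : EuclideanSpace ℝ (Fin m)) : EuclideanSpace ℝ (Fin m) :=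
  WithLp.toLp 2 (fun i => Real.sign (s i))

/-!
Along the motion `Ψ = ‖s‖²` satisfies `Ψ' = 2⟪s, s'⟫ ≤ -2γ‖s‖ = -2γ√Ψ`, because
`⟪s, sgn s⟫ = ‖s‖₁ ≥ ‖s‖` and `⟪s, w⟫ ≤ c‖s‖`. Comparing `Ψ` with the solution
`(√Ψ(0) - γt)²` of `B' = -2γ√B` shows that `Ψ` vanishes at `t = ‖s(0)‖/γ`, and `Ψ` is
antitone, so it stays zero afterwards.
-/

open Set

lemma Real.self_mul_sign (r : ℝ) : r * Real.sign r = |r| := by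
  rcases lt_trichotomy r 0 with h | rfl | h
  · rw [Real.sign_of_neg h, abs_of_neg h, mul_neg_one]
  · simp
  · rw [Real.sign_of_pos h, abs_of_pos h, mul_one]

lemma EuclideanSpace.norm_le_sum_abs {ι : Type*} [Fintype ι] (v : EuclideanSpace ℝ ι) :
    ‖v‖ ≤ ∑ i, |v i| := by
  rw [EuclideanSpace.norm_eq, Real.sqrt_le_left (Finset.sum_nonneg fun i _ => abs_nonneg _)]
  simpa only [Real.norm_eq_abs] using
    Finset.sum_sq_le_sq_sum_of_nonneg fun i _ => abs_nonneg (v i)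

lemma inner_signVec_self {m : ℕ} (v : EuclideanSpace ℝ (Fin m)) :
    ⟪v, signVec v⟫ = ∑ i, |v i| := by
  simp only [PiLp.inner_apply, signVec, RCLike.inner_apply, conj_trivial]
  exact Finset.sum_congr rfl fun i _ => by rw [mul_comm, Real.self_mul_sign]

lemma norm_le_inner_signVec {m : ℕ} (v : EuclideanSpace ℝ (Fin m)) :
    ‖v‖ ≤ ⟪v, signVec v⟫ :=
  (inner_signVec_self v).symm ▸ EuclideanSpace.norm_le_sum_abs v

lemma inner_sub_smul_signVec_le {m : ℕ} {γ c : ℝ} (hγ : 0 ≤ γ)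
    (v w : EuclideanSpace ℝ (Fin m)) (hw : ‖w‖ ≤ c) :
    ⟪v, w - (γ + c) • signVec v⟫ ≤ -γ * ‖v‖ := by
  have hvw : ⟪v, w⟫ ≤ c * ‖v‖ := by
    calc ⟪v, w⟫ ≤ ‖v‖ * ‖w‖ := real_inner_le_norm v w
      _ ≤ ‖v‖ * c := mul_le_mul_of_nonneg_left hw (norm_nonneg v)
      _ = c * ‖v‖ := mul_comm _ _
  have hsgn : (γ + c) * ‖v‖ ≤ (γ + c) * ⟪v, signVec v⟫ :=
    mul_le_mul_of_nonneg_left (norm_le_inner_signVec v) (by linarith [norm_nonneg w])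
  rw [inner_sub_right, real_inner_smul_right]
  linarith

/-- Comparison with the solution `(√(f a) - γ (x - a))²` of `B' = -2γ√B`. -/
lemma le_sq_of_hasDerivWithinAt_le_neg_sqrt {f f' : ℝ → ℝ} {a b γ : ℝ} (hγ : 0 < γ)
    (hf : ContinuousOn f (Icc a b))
    (hf' : ∀ x ∈ Ico a b, HasDerivWithinAt f (f' x) (Ici x) x)
    (hbound : ∀ x ∈ Ico a b, f' x ≤ -2 * γ * √(f x)) :
    ∀ x ∈ Icc a b, f x ≤ (√(f a) - γ * (x - a)) ^ 2 := by
  intro x hx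
  refine le_of_forall_pos_le_add fun ε hε => ?_
  set u : ℝ → ℝ := fun y => √(f a) - γ * (y - a)
  have hB : ∀ y, HasDerivAt (fun y => u y ^ 2 + ε) (-2 * γ * u y) y := fun y => by
    have hu : HasDerivAt u (-γ) y := by
      simpa using (((hasDerivAt_id y).sub_const a).const_mul γ).const_sub (√(f a))
    exact ((hu.pow 2).add_const ε).congr_deriv (by ring)
  -- The `ε`-shift makes the comparison strict where `f` touches the barrier.
  refine image_le_of_deriv_right_lt_deriv_boundary hf hf' ?_ hB (fun y hy hfy => ?_) hx
  · have : f a ≤ √(f a) ^ 2 := by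
      rcases le_total 0 (f a) with h | h
      · rw [Real.sq_sqrt h]
      · exact h.trans (sq_nonneg _)
    simp only [u, sub_self, mul_zero, sub_zero]
    linarith
  · have hlt : u y < √(f y) := by
      rw [hfy]
      refine (le_abs_self (u y)).trans_lt ((Real.lt_sqrt (abs_nonneg _)).2 ?_)
      rw [sq_abs]
      linarith
    have := hbound y hy
    nlinarith

lemma nonpos_of_hasDerivWithinAt_le_neg_sqrt {f f' : ℝ → ℝ} {a γ : ℝ} (hγ : 0 < γ)
    (hf' : ∀ x ≥ a, HasDerivWithinAt f (f' x) (Ici a) x)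
    (hbound : ∀ x ≥ a, f' x ≤ -2 * γ * √(f x)) :
    ∀ x, a + √(f a) / γ ≤ x → f x ≤ 0 := by
  intro x hx
  set T := a + √(f a) / γ
  have haT : a ≤ T := le_add_of_nonneg_right (by positivity)
  have hcont : ContinuousOn f (Ici a) := fun y hy => (hf' y hy).continuousWithinAt
  have hreach : f T ≤ 0 := by
    have := le_sq_of_hasDerivWithinAt_le_neg_sqrt hγ (hcont.mono Icc_subset_Ici_self)
      (fun y hy => (hf' y hy.1).mono (Ici_subset_Ici.2 hy.1)) (fun y hy => hbound y hy.1)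
      T ⟨haT, le_rfl⟩
    rwa [add_sub_cancel_left, mul_div_cancel₀ _ hγ.ne', sub_self,
      zero_pow two_ne_zero] at this
  have hanti : AntitoneOn f (Ici a) := by
    refine antitoneOn_of_hasDerivWithinAt_nonpos (f' := f') (convex_Ici a) hcont (fun y hy => ?_)
      (fun y hy => ?_) <;> simp only [interior_Ici] at hy ⊢
    · exact (hf' y hy.le).mono Ioi_subset_Ici_self
    · have := hbound y hy.le
      have := Real.sqrt_nonneg (f y)
      nlinarith
  exact (hanti (mem_Ici.2 haT) (mem_Ici.2 (haT.trans hx)) hx).trans hreach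

theorem sliding_surface_finite_time_reaching_general
    (m : ℕ) (γ : ℝ) (hγ : 0 < γ)
    (s w : ℝ → EuclideanSpace ℝ (Fin m)) (c : ℝ → ℝ)
    (hw : ∀ t ≥ (0 : ℝ), ‖w t‖ ≤ c t)
    (hderiv : ∀ t ≥ (0 : ℝ),
      HasDerivWithinAt s (w t - (γ + c t) • signVec (s t)) (Set.Ici 0) t) :
    ∀ t, ‖s 0‖ / γ ≤ t → s t = 0 := by
  intro t ht
  have hΨ' : ∀ x ≥ (0 : ℝ), HasDerivWithinAt (‖s ·‖ ^ 2)
      (2 * ⟪s x, w x - (γ + c x) • signVec (s x)⟫) (Ici 0) x :=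
    fun x hx => (hderiv x hx).norm_sq
  have hbound : ∀ x ≥ (0 : ℝ),
      2 * ⟪s x, w x - (γ + c x) • signVec (s x)⟫ ≤ -2 * γ * √(‖s x‖ ^ 2) := fun x hx => by
    rw [Real.sqrt_sq (norm_nonneg _)]
    linarith [inner_sub_smul_signVec_le hγ.le (s x) (w x) (hw x hx)]
  have hextinct := nonpos_of_hasDerivWithinAt_le_neg_sqrt hγ hΨ' hbound t
    (by rwa [zero_add, Real.sqrt_sq (norm_nonneg _)])
  exact norm_eq_zero.1 (pow_eq_zero_iff two_ne_zero |>.1 (le_antisymm hextinct (by positivity)))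

/-- if `s` is differentiable on `[0,∞)` with
`s′(t) = w(t) − (γ + c(t)) • sgn(s(t))` and `‖w(t)‖ ≤ c(t)` for all `t ≥ 0`, then
`s(t) = 0` for every `t ≥ ‖s(0)‖/γ`: the sliding surface is reached in finite time
and maintained afterwards. -/
theorem sliding_surface_finite_time_reaching
    (m : ℕ) (hm : 0 < m) (γ : ℝ) (hγ : 0 < γ)
    (s w : ℝ → EuclideanSpace ℝ (Fin m)) (c : ℝ → ℝ)
    (hw : ∀ t ≥ (0 : ℝ), ‖w t‖ ≤ c t)
    (hderiv : ∀ t ≥ (0 : ℝ),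
      HasDerivWithinAt s (w t - (γ + c t) • signVec (s t)) (Set.Ici 0) t) :
    ∀ t, ‖s 0‖ / γ ≤ t → s t = 0 :=
  sliding_surface_finite_time_reaching_general m γ hγ s w c hw hderiv
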